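/- arXiv:1410.5272 — 4 statements merged into one kernel-verified Lean document; each statement's English description precedes it below -/
import Mathlib

section
/- Let s > 0, let μ be a Radon measure on ℝ^d, and let φ : [0,∞) → ℝ be a C^∞ function supported in [0,2] which is constant on [0,1/2]. Then there is a constant c, depending only on φ (and on s, d), such that for every x ∈ ℝ^d and all 0 ≤ r_1 < r_2, ∫_{r_1}^{r_2} |Δ^s_{μ,φ}(x,r)| dr/r ≤ c ∫_{r_1/2}^{2r_2} |Δ^s_μ(x,r)| dr/r. -/
open MeasureTheory Metric Set ENNReal Filter Topology

/-- The average `s`-dimensional density `μ(B(x,r))/r^s`. -/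
noncomputable def ballDensity {d : ℕ} (μ : Measure (EuclideanSpace ℝ (Fin d))) (s : ℝ)
    (x : EuclideanSpace ℝ (Fin d)) (r : ℝ) : ℝ :=
  (μ (ball x r)).toReal / r ^ s

/-- `Δ^s_μ(x,r) = μ(B(x,r))/r^s − μ(B(x,2r))/(2r)^s`. -/
noncomputable def deltaDensity {d : ℕ} (μ : Measure (EuclideanSpace ℝ (Fin d))) (s : ℝ)
    (x : EuclideanSpace ℝ (Fin d)) (r : ℝ) : ℝ :=
  ballDensity μ s x r - ballDensity μ s x (2 * r)

/-- `Δ^s_{μ,φ}(x,t) = ∫ (φ_t(|y−x|) − φ_{2t}(|y−x|)) dμ(y)` where `φ_t(u) = t^{−s} φ(u/t)`. -/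
noncomputable def deltaPhi {d : ℕ} (μ : Measure (EuclideanSpace ℝ (Fin d))) (s : ℝ)
    (φ : ℝ → ℝ) (x : EuclideanSpace ℝ (Fin d)) (t : ℝ) : ℝ :=
  ∫ y, (φ (dist y x / t) / t ^ s - φ (dist y x / (2 * t)) / (2 * t) ^ s) ∂μ


/-!
Since `φ` vanishes on `(-∞, 1/2]`, we have `φ u = -∫_u^∞ φ'`, and Fubini turns
`∫ φ(|y - x|/t) dμ(y)` into `-∫ φ'(v) μ(B(x, tv)) dv`. Subtracting the same identity at scale `2t`
gives `Δ^s_{μ,φ}(x,t) = -∫ φ'(v) v^s Δ^s_μ(x,tv) dv`, where `φ'` lives on `[1/2, 2]`.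
Integrating against `dt/t`, exchanging the integrals and using the dilation invariance of `dr/r`,
each `v` contributes at most `|φ'(v) v^s| ∫_{r₁/2}^{2r₂} |Δ^s_μ(x,r)| dr/r`,
so any `c ≥ ∫ |φ'(v) v^s| dv` works.
-/

open Function

section Profile

variable {φ : ℝ → ℝ}

lemma support_subset_Icc_half_two (hφ : Continuous φ) (hsupp : support φ ⊆ Icc 0 2)
    (hconst : ∀ u ∈ Icc (0 : ℝ) (1 / 2), φ u = φ 0) : support φ ⊆ Icc (1 / 2) 2 := by
  have hneg : Iio 0 ⊆ {u | φ u = 0} := fun u hu =>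
    notMem_support.1 fun h => (not_le.2 hu) (hsupp h).1
  have h0 : φ 0 = 0 :=
    (isClosed_eq hφ continuous_const).closure_subset_iff.2 hneg (by simp [closure_Iio])
  intro u hu
  refine ⟨?_, (hsupp hu).2⟩
  by_contra! h
  exact hu ((hconst u ⟨(hsupp hu).1, h.le⟩).trans h0)

lemma support_deriv_subset_Icc {a b : ℝ} (hsupp : support φ ⊆ Icc a b) :
    support (deriv φ) ⊆ Icc a b :=
  support_deriv_subset.trans (closure_minimal hsupp isClosed_Icc)

lemma integral_comp_eq_neg_integral_deriv_mul_measureReal {α : Type*} [MeasurableSpace α]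
    {μ : Measure α} [SFinite μ] {f : α → ℝ} (hf : Measurable f) (hφ : ContDiff ℝ 1 φ)
    {a b : ℝ} (hsupp : support φ ⊆ Icc a b) (hμ : μ {y | f y < b} ≠ ∞) :
    ∫ y, φ (f y) ∂μ = -∫ v, deriv φ v * μ.real {y | f y < v} := by
  set F : α × ℝ → ℝ := {p | f p.1 < p.2}.indicator fun p => deriv φ p.2
  have hcs : HasCompactSupport φ :=
    HasCompactSupport.intro isCompact_Icc fun u hu => notMem_support.1 fun h => hu (hsupp h)
  have hφ' : Continuous (deriv φ) := hφ.continuous_deriv le_rfl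
  have hF_meas : MeasurableSet {p : α × ℝ | f p.1 < p.2} :=
    measurableSet_lt (hf.comp measurable_fst) measurable_snd
  have hF_int : Integrable F (μ.prod volume) := by
    obtain ⟨C, hC⟩ := hcs.deriv.exists_bound_of_continuous hφ'
    refine IntegrableOn.integrable_of_forall_notMem_eq_zero (s := {y | f y < b} ×ˢ Icc a b) ?_ ?_
    · refine Measure.integrableOn_of_bounded (M := C) ?_ ?_ (ae_of_all _ fun p => ?_)
      · rw [Measure.prod_prod]
        exact mul_ne_top hμ measure_Icc_lt_top.ne
      · exact ((hφ'.measurable.comp measurable_snd).indicator hF_meas).aestronglyMeasurable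
      · exact (norm_indicator_le_norm_self _ _).trans (hC p.2)
    · intro p hp
      simp only [F, indicator_apply_eq_zero, mem_ofPred_eq]
      intro hlt
      by_contra hne
      have hv := support_deriv_subset_Icc hsupp hne
      exact hp ⟨hlt.trans_le hv.2, hv⟩
  have hslice : ∀ y, φ (f y) = -∫ v, F (y, v) := fun y => by
    have hF : (fun v => F (y, v)) = (Ioi (f y)).indicator (deriv φ) := rfl
    rw [hF, integral_indicator measurableSet_Ioi, hcs.integral_Ioi_deriv_eq hφ, neg_neg]
  have hfiber : ∀ v, ∫ y, F (y, v) ∂μ = deriv φ v * μ.real {y | f y < v} := fun v => by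
    rw [mul_comm, ← smul_eq_mul,
      ← integral_indicator_const _ (measurableSet_lt hf measurable_const)]
    rfl
  calc ∫ y, φ (f y) ∂μ = -∫ y, (∫ v, F (y, v)) ∂μ := by simp_rw [hslice]; exact integral_neg _
    _ = -∫ v, ∫ y, F (y, v) ∂μ := by rw [integral_integral_swap (f := fun y v => F (y, v)) hF_int]
    _ = _ := by simp_rw [hfiber]

lemma lintegral_enorm_deriv_mul_rpow_lt_top (hφ : ContDiff ℝ 1 φ) {a b : ℝ}
    (hsupp : support φ ⊆ Icc a b) (ha : 0 < a) (s : ℝ) :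
    ∫⁻ v, ‖deriv φ v * v ^ s‖ₑ < ∞ := by
  have hIcc : IntegrableOn (fun v => deriv φ v * v ^ s) (Icc a b) :=
    ((hφ.continuous_deriv le_rfl).continuousOn.mul fun v hv =>
      (Real.continuousAt_rpow_const v s (Or.inl (ha.trans_le hv.1).ne')).continuousWithinAt
      ).integrableOn_compact isCompact_Icc
  refine (hIcc.integrable_of_forall_notMem_eq_zero fun v hv => ?_).hasFiniteIntegral
  rw [notMem_support.1 fun h => hv (support_deriv_subset_Icc hsupp h), zero_mul]

end Profile

section Ball

variable {X : Type*} [MetricSpace X] [ProperSpace X] [MeasurableSpace X] [BorelSpace X]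
  {μ : Measure X} [IsLocallyFiniteMeasure μ] {x : X} {φ : ℝ → ℝ} {a b t : ℝ}

lemma integral_comp_dist_div_eq (hφ : ContDiff ℝ 1 φ) (hsupp : support φ ⊆ Icc a b)
    (ht : 0 < t) : ∫ y, φ (dist y x / t) ∂μ = -∫ v, deriv φ v * μ.real (ball x (t * v)) := by
  have hball : ∀ v, {y | dist y x / t < v} = ball x (t * v) := fun v => by
    ext y
    rw [mem_ofPred_eq, mem_ball, div_lt_iff₀ ht, mul_comm]
  simp_rw [← hball]
  exact integral_comp_eq_neg_integral_deriv_mul_measureReal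
    ((measurable_id.dist measurable_const).div_const t) hφ hsupp
    (by rw [hball]; exact measure_ball_lt_top.ne)

lemma integrable_comp_dist_div (hφ : Continuous φ) (hsupp : support φ ⊆ Icc a b) (ht : 0 < t) :
    Integrable (fun y => φ (dist y x / t)) μ := by
  have hcont : Continuous fun y => φ (dist y x / t) :=
    hφ.comp ((continuous_id.dist continuous_const).div_const t)
  refine hcont.integrable_of_hasCompactSupport
    (HasCompactSupport.intro (isCompact_closedBall x (t * b)) fun y hy => ?_)
  refine notMem_support.1 fun h => hy ?_
  rw [mem_closedBall, ← div_le_iff₀' ht]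
  exact (hsupp h).2

lemma integrable_mul_measureReal_ball {h : ℝ → ℝ} (hh : Continuous h)
    (hsupp : support h ⊆ Icc a b) (ht : 0 ≤ t) :
    Integrable (fun v => h v * μ.real (ball x (t * v))) := by
  have hmono : Monotone fun v => μ.real (ball x (t * v)) := fun v w hvw =>
    measureReal_mono (ball_subset_ball (mul_le_mul_of_nonneg_left hvw ht))
      measure_ball_lt_top.ne
  have hIcc : IntegrableOn (fun v => h v * μ.real (ball x (t * v))) (Icc a b) :=
    ((hmono.monotoneOn _).integrableOn_isCompact isCompact_Icc).continuousOn_mul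
      hh.continuousOn isCompact_Icc
  refine hIcc.integrable_of_forall_notMem_eq_zero fun v hv => ?_
  rw [notMem_support.1 fun h => hv (hsupp h), zero_mul]

end Ball

lemma setLIntegral_Ioc_enorm_comp_mul_div {G : ℝ → ℝ} (hG : Measurable G) {v : ℝ} (hv : 0 < v)
    (a b : ℝ) :
    ∫⁻ t in Ioc a b, ‖G (t * v) / t‖ₑ = ∫⁻ r in Ioc (a * v) (b * v), ‖G r / r‖ₑ := by
  have hscale : ∀ t, ‖G (t * v) / t‖ₑ = ENNReal.ofReal v * ‖G (t * v) / (t * v)‖ₑ := fun t => by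
    rw [← Real.enorm_of_nonneg hv.le, ← enorm_mul]
    rcases eq_or_ne t 0 with rfl | ht
    · simp
    · field_simp
  have hmeas : Measurable fun r => ‖G r / r‖ₑ := (hG.div measurable_id).enorm
  calc ∫⁻ t in Ioc a b, ‖G (t * v) / t‖ₑ
      = ENNReal.ofReal v * ∫⁻ t in Ioc a b, ‖G (t * v) / (t * v)‖ₑ := by
        simp_rw [hscale]
        exact lintegral_const_mul _ (hmeas.comp (measurable_mul_const v))
    _ = ∫⁻ r in Ioc (a * v) (b * v), ‖G r / r‖ₑ := by
        conv_rhs => rw [← Real.smul_map_volume_mul_right hv.ne']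
        rw [Measure.restrict_smul, lintegral_smul_measure,
          setLIntegral_map measurableSet_Ioc hmeas (measurable_mul_const v),
          preimage_mul_const_Ioc₀ _ _ hv, mul_div_cancel_right₀ _ hv.ne',
          mul_div_cancel_right₀ _ hv.ne', abs_of_pos hv, smul_eq_mul]

lemma ofReal_abs_div_eq_enorm_div (c : ℝ) {t : ℝ} (ht : 0 ≤ t) :
    ENNReal.ofReal (|c| / t) = ‖c / t‖ₑ := by
  rw [Real.enorm_eq_ofReal_abs, abs_div, abs_of_nonneg ht]

section Density

variable {d : ℕ} {μ : Measure (EuclideanSpace ℝ (Fin d))} {x : EuclideanSpace ℝ (Fin d)} {s : ℝ}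

lemma measurable_deltaDensity : Measurable (deltaDensity μ s x) := by
  have hball : Measurable fun r => (μ (ball x r)).toReal :=
    measurable_toReal.comp (Monotone.measurable fun _ _ h => measure_mono (ball_subset_ball h))
  have hpow : Measurable fun r : ℝ => r ^ s := measurable_id.pow_const s
  exact (hball.div hpow).sub
    ((hball.comp (measurable_const_mul 2)).div (hpow.comp (measurable_const_mul 2)))

variable [IsLocallyFiniteMeasure μ] {φ : ℝ → ℝ} {a b t : ℝ}

lemma deltaPhi_eq_neg_integral (hφ : ContDiff ℝ 1 φ) (hsupp : support φ ⊆ Icc a b) (ha : 0 < a)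
    (ht : 0 < t) :
    deltaPhi μ s φ x t = -∫ v, deriv φ v * v ^ s * deltaDensity μ s x (t * v) := by
  have h2t : 0 < 2 * t := by positivity
  have hφ' : Continuous (deriv φ) := hφ.continuous_deriv le_rfl
  have hderiv := support_deriv_subset_Icc hsupp
  have hpt : ∀ v, deriv φ v * μ.real (ball x (t * v)) / t ^ s
      - deriv φ v * μ.real (ball x (2 * t * v)) / (2 * t) ^ s
      = deriv φ v * v ^ s * deltaDensity μ s x (t * v) := fun v => by
    by_cases hv : deriv φ v = 0
    · simp [hv]
    have hv0 : 0 < v := ha.trans_le (hderiv hv).1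
    rw [deltaDensity, ballDensity, ballDensity, Real.mul_rpow ht.le hv0.le,
      show 2 * (t * v) = 2 * t * v by ring, Real.mul_rpow h2t.le hv0.le]
    simp only [measureReal_def]
    field_simp
  calc deltaPhi μ s φ x t = (∫ y, φ (dist y x / t) ∂μ) / t ^ s
        - (∫ y, φ (dist y x / (2 * t)) ∂μ) / (2 * t) ^ s := by
        rw [deltaPhi, integral_sub
          ((integrable_comp_dist_div hφ.continuous hsupp ht).div_const _)
          ((integrable_comp_dist_div hφ.continuous hsupp h2t).div_const _),
          integral_div, integral_div]
    _ = -∫ v, (deriv φ v * μ.real (ball x (t * v)) / t ^ s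
        - deriv φ v * μ.real (ball x (2 * t * v)) / (2 * t) ^ s) := by
        rw [integral_comp_dist_div_eq hφ hsupp ht, integral_comp_dist_div_eq hφ hsupp h2t,
          integral_sub ((integrable_mul_measureReal_ball hφ' hderiv ht.le).div_const _)
            ((integrable_mul_measureReal_ball hφ' hderiv h2t.le).div_const _),
          integral_div, integral_div]
        ring
    _ = _ := by simp_rw [hpt]

lemma enorm_deltaPhi_div_le (hφ : ContDiff ℝ 1 φ) (hsupp : support φ ⊆ Icc a b) (ha : 0 < a)
    (ht : 0 < t) :
    ‖deltaPhi μ s φ x t / t‖ₑ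
      ≤ ∫⁻ v, ‖deriv φ v * v ^ s‖ₑ * ‖deltaDensity μ s x (t * v) / t‖ₑ := by
  rw [deltaPhi_eq_neg_integral hφ hsupp ha ht, neg_div, enorm_neg, ← integral_div]
  refine (enorm_integral_le_lintegral_enorm _).trans_eq (lintegral_congr fun v => ?_)
  rw [mul_div_assoc, enorm_mul]

lemma lintegral_enorm_deltaPhi_div_le (hφ : ContDiff ℝ 1 φ) (hsupp : support φ ⊆ Icc a b)
    (ha : 0 < a) {r₁ r₂ : ℝ} (hr₁ : 0 ≤ r₁) (hr₂ : 0 ≤ r₂) :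
    ∫⁻ t in Ioc r₁ r₂, ‖deltaPhi μ s φ x t / t‖ₑ
      ≤ (∫⁻ v, ‖deriv φ v * v ^ s‖ₑ) *
          ∫⁻ r in Ioc (r₁ * a) (r₂ * b), ‖deltaDensity μ s x r / r‖ₑ := by
  set I := ∫⁻ r in Ioc (r₁ * a) (r₂ * b), ‖deltaDensity μ s x r / r‖ₑ
  have hΔ : Measurable (deltaDensity μ s x) := measurable_deltaDensity
  have hweight : Measurable fun v => ‖deriv φ v * v ^ s‖ₑ :=
    ((measurable_deriv φ).mul (measurable_id.pow_const s)).enorm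
  have hinner : ∀ v, ‖deriv φ v * v ^ s‖ₑ * ∫⁻ t in Ioc r₁ r₂, ‖deltaDensity μ s x (t * v) / t‖ₑ
      ≤ ‖deriv φ v * v ^ s‖ₑ * I := fun v => by
    by_cases hv : deriv φ v = 0
    · simp [hv]
    obtain ⟨hav, hvb⟩ := support_deriv_subset_Icc hsupp hv
    rw [setLIntegral_Ioc_enorm_comp_mul_div hΔ (ha.trans_le hav)]
    exact mul_le_mul_right (lintegral_mono_set (Ioc_subset_Ioc
      (mul_le_mul_of_nonneg_left hav hr₁) (mul_le_mul_of_nonneg_left hvb hr₂))) _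
  have hmeas : Measurable (uncurry fun t v =>
      ‖deriv φ v * v ^ s‖ₑ * ‖deltaDensity μ s x (t * v) / t‖ₑ) :=
    (hweight.comp measurable_snd).mul
      ((hΔ.comp (measurable_fst.mul measurable_snd)).div measurable_fst).enorm
  calc ∫⁻ t in Ioc r₁ r₂, ‖deltaPhi μ s φ x t / t‖ₑ
      ≤ ∫⁻ t in Ioc r₁ r₂, ∫⁻ v, ‖deriv φ v * v ^ s‖ₑ * ‖deltaDensity μ s x (t * v) / t‖ₑ :=
        setLIntegral_mono' measurableSet_Ioc fun t ht =>
          enorm_deltaPhi_div_le hφ hsupp ha (hr₁.trans_lt ht.1)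
    _ = ∫⁻ v, ‖deriv φ v * v ^ s‖ₑ * ∫⁻ t in Ioc r₁ r₂, ‖deltaDensity μ s x (t * v) / t‖ₑ := by
        rw [lintegral_lintegral_swap hmeas.aemeasurable]
        refine lintegral_congr fun v => lintegral_const_mul _ ?_
        exact ((hΔ.comp (measurable_id.mul_const v)).div measurable_id).enorm
    _ ≤ ∫⁻ v, ‖deriv φ v * v ^ s‖ₑ * I := lintegral_mono hinner
    _ = _ := lintegral_mul_const _ hweight

end Density

theorem statement3_general (d : ℕ) (s : ℝ) (φ : ℝ → ℝ)
    (hφ_smooth : ContDiff ℝ (⊤ : ℕ∞) φ)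
    (hφ_supp : Function.support φ ⊆ Icc (0 : ℝ) 2)
    (hφ_const : ∀ u ∈ Icc (0 : ℝ) (1 / 2), φ u = φ 0) :
    ∃ c : ℝ, 0 < c ∧
      ∀ (μ : Measure (EuclideanSpace ℝ (Fin d))) [IsLocallyFiniteMeasure μ],
        ∀ (x : EuclideanSpace ℝ (Fin d)) (r₁ r₂ : ℝ), 0 ≤ r₁ → r₁ < r₂ →
          (∫⁻ r in Ioc r₁ r₂, ENNReal.ofReal (|deltaPhi μ s φ x r| / r))
            ≤ ENNReal.ofReal c *
                ∫⁻ r in Ioc (r₁ / 2) (2 * r₂), ENNReal.ofReal (|deltaDensity μ s x r| / r) := by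
  have hφ : ContDiff ℝ 1 φ := hφ_smooth.of_le (by exact_mod_cast le_top)
  have hsupp := support_subset_Icc_half_two hφ.continuous hφ_supp hφ_const
  set K := ∫⁻ v, ‖deriv φ v * v ^ s‖ₑ
  have hK : K ≤ ENNReal.ofReal (K.toReal + 1) := by
    rw [ENNReal.ofReal_add toReal_nonneg zero_le_one,
      ofReal_toReal (lintegral_enorm_deriv_mul_rpow_lt_top hφ hsupp (by norm_num) s).ne]
    exact le_self_add
  refine ⟨K.toReal + 1, by positivity, fun μ _ x r₁ r₂ hr₁ hr₁₂ => ?_⟩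
  have hr₂ : 0 ≤ r₂ := hr₁.trans hr₁₂.le
  rw [setLIntegral_congr_fun measurableSet_Ioc fun t ht =>
      ofReal_abs_div_eq_enorm_div _ (hr₁.trans ht.1.le),
    setLIntegral_congr_fun measurableSet_Ioc fun r hr =>
      ofReal_abs_div_eq_enorm_div _ ((by positivity : 0 ≤ r₁ / 2).trans hr.1.le),
    div_eq_mul_one_div, mul_comm 2 r₂]
  exact (lintegral_enorm_deltaPhi_div_le hφ hsupp (by norm_num) hr₁ hr₂).trans
    (mul_le_mul_left hK _)

theorem statement3 (d : ℕ) (s : ℝ) (hs : 0 < s) (φ : ℝ → ℝ)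
    (hφ_smooth : ContDiff ℝ (⊤ : ℕ∞) φ)
    (hφ_supp : Function.support φ ⊆ Icc (0 : ℝ) 2)
    (hφ_const : ∀ u ∈ Icc (0 : ℝ) (1 / 2), φ u = φ 0) :
    ∃ c : ℝ, 0 < c ∧
      ∀ (μ : Measure (EuclideanSpace ℝ (Fin d))) [IsLocallyFiniteMeasure μ],
        ∀ (x : EuclideanSpace ℝ (Fin d)) (r₁ r₂ : ℝ), 0 ≤ r₁ → r₁ < r₂ →
          (∫⁻ r in Ioc r₁ r₂, ENNReal.ofReal (|deltaPhi μ s φ x r| / r))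
            ≤ ENNReal.ofReal c *
                ∫⁻ r in Ioc (r₁ / 2) (2 * r₂), ENNReal.ofReal (|deltaDensity μ s x r| / r) :=
  statement3_general d s φ hφ_smooth hφ_supp hφ_const
end

section
/- Let s > 0, let μ be a Radon measure on ℝ^d, and let φ : [0,∞) → ℝ be a C^∞ function supported in [0,2] which is constant on [0,1/2]. Then for every x ∈ ℝ^d and every R > 0, Δ^s_{μ,φ}(x,R) = − ∫_{1/2}^{2} t^s φ'(t) Δ^s_μ(x,tR) dt. -/
open MeasureTheory Metric Set ENNReal Filter

/-!
Since `φ` is constant on `[0, 1/2]` and vanishes on `[2, ∞)`, the fundamental theorem of calculus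
gives `φ u = -∫_{1/2}^2 1_{u < t} φ'(t) dt` for `u ≥ 0`. Putting `u = |y - x| / T` and integrating
in `y`, Fubini turns `∫ φ(|y - x| / T) dμ(y)` into `-∫_{1/2}^2 φ'(t) μ(B(x, tT)) dt`. Applying this
with `T = R` and `T = 2R` and using `t^s (tT)^{-s} = T^{-s}` yields the identity.
-/

lemma Continuous.eq_zero_of_support_subset_Iic {φ : ℝ → ℝ} {b u : ℝ} (hφ : Continuous φ)
    (hsupp : Function.support φ ⊆ Iic b) (hu : b ≤ u) : φ u = 0 := by
  have h : EqOn φ 0 (Ioi b) := fun v hv ↦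
    Function.notMem_support.mp fun hv' ↦ (not_le.mpr hv) (mem_Iic.mp (hsupp hv'))
  exact h.closure hφ continuous_const (by rwa [closure_Ioi])

section LayerCake

variable {φ : ℝ → ℝ} {a b : ℝ}

lemma eq_neg_integral_indicator_Ioi_deriv (hab : a ≤ b) (hφ : ContDiff ℝ 1 φ)
    (hφb : ∀ u, b ≤ u → φ u = 0) (hφa : ∀ u ∈ Icc 0 a, φ u = φ 0) {u : ℝ} (hu : 0 ≤ u) :
    φ u = -∫ t in Ioc a b, (Ioi u).indicator (deriv φ) t := by
  rw [integral_indicator measurableSet_Ioi, Measure.restrict_restrict measurableSet_Ioi,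
    inter_comm, Ioc_inter_Ioi]
  rcases le_or_gt u b with hub | hbu
  · have hFTC : ∫ t in Ioc (max a u) b, deriv φ t = φ b - φ (max a u) := by
      rw [← intervalIntegral.integral_of_le (max_le hab hub)]
      exact intervalIntegral.integral_deriv_eq_sub
        (fun t _ ↦ (hφ.differentiable one_ne_zero).differentiableAt)
        ((hφ.continuous_deriv le_rfl).intervalIntegrable _ _)
    rw [hFTC, hφb b le_rfl]
    rcases le_or_gt u a with hua | hau
    · rw [max_eq_left hua, hφa u ⟨hu, hua⟩, hφa a ⟨hu.trans hua, le_rfl⟩]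
      ring
    · rw [max_eq_right hau.le]
      ring
  · rw [Ioc_eq_empty (not_lt.mpr (le_max_of_le_right hbu.le)), Measure.restrict_empty,
      integral_zero_measure, hφb u hbu.le, neg_zero]

variable {X : Type*} [PseudoMetricSpace X] [MeasurableSpace X] [OpensMeasurableSpace X]

theorem integral_comp_dist_div_of_isFiniteMeasure (ν : Measure X) [IsFiniteMeasure ν]
    (hab : a ≤ b) (hφ : ContDiff ℝ 1 φ) (hφb : ∀ u, b ≤ u → φ u = 0)
    (hφa : ∀ u ∈ Icc 0 a, φ u = φ 0) (x : X) {T : ℝ} (hT : 0 < T) :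
    ∫ y, φ (dist y x / T) ∂ν = -∫ t in a..b, deriv φ t * ν.real (ball x (t * T)) := by
  set F : X → ℝ → ℝ := fun y t ↦ (ball x (t * T)).indicator (fun _ ↦ deriv φ t) y
  have hφ_eq (y : X) : φ (dist y x / T) = -∫ t in Ioc a b, F y t := by
    rw [eq_neg_integral_indicator_Ioi_deriv hab hφ hφb hφa (by positivity)]
    congr 2 with t
    simp only [F, indicator, mem_Ioi, mem_ball, div_lt_iff₀ hT]
  have hF_meas : Measurable (Function.uncurry F) := by
    have hS : MeasurableSet {p : X × ℝ | dist p.1 x < p.2 * T} :=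
      measurableSet_lt ((continuous_id.dist continuous_const).measurable.comp measurable_fst)
        (measurable_snd.mul_const T)
    exact ((hφ.continuous_deriv le_rfl).measurable.comp measurable_snd).indicator hS
  have hF_int : Integrable (Function.uncurry F) (ν.prod (volume.restrict (Ioc a b))) := by
    refine Integrable.mono' ((((hφ.continuous_deriv le_rfl).integrableOn_Icc.mono_set
      Ioc_subset_Icc_self).norm).comp_snd ν) hF_meas.aestronglyMeasurable ?_
    exact Eventually.of_forall fun p ↦ norm_indicator_le_norm_self (fun _ ↦ deriv φ p.2) p.1
  have hF_inner (t : ℝ) : ∫ y, F y t ∂ν = deriv φ t * ν.real (ball x (t * T)) := by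
    rw [integral_indicator_const _ measurableSet_ball, smul_eq_mul, mul_comm]
  simp_rw [hφ_eq, integral_neg, integral_integral_swap hF_int, hF_inner,
    intervalIntegral.integral_of_le hab]

end LayerCake

section LocallyFinite

variable {X : Type*} [PseudoMetricSpace X] [ProperSpace X] [MeasurableSpace X]
  (μ : Measure X) [IsLocallyFiniteMeasure μ]

lemma monotone_measureReal_ball (x : X) : Monotone fun r ↦ μ.real (ball x r) :=
  fun _ _ hrr' ↦ measureReal_mono (ball_subset_ball hrr') measure_ball_lt_top.ne

lemma intervalIntegrable_mul_measureReal_ball {g : ℝ → ℝ} {a b : ℝ}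
    (hg : ContinuousOn g (uIcc a b)) (x : X) {T : ℝ} (hT : 0 ≤ T) :
    IntervalIntegrable (fun t ↦ g t * μ.real (ball x (t * T))) volume a b :=
  ((monotone_measureReal_ball μ x).comp (monotone_mul_right_of_nonneg hT)).intervalIntegrable
    |>.continuousOn_mul hg

variable [OpensMeasurableSpace X]

lemma integrable_comp_dist_div_s4 {φ : ℝ → ℝ} {b : ℝ} (hφ : Continuous φ)
    (hφb : ∀ u, b ≤ u → φ u = 0) (x : X) {T : ℝ} (hT : 0 < T) :
    Integrable (fun y ↦ φ (dist y x / T)) μ := by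
  have hcont : Continuous fun y ↦ φ (dist y x / T) :=
    hφ.comp ((continuous_id.dist continuous_const).div_const T)
  refine hcont.integrable_of_hasCompactSupport
    (HasCompactSupport.intro (isCompact_closedBall x (b * T)) fun y hy ↦ hφb _ ?_)
  rw [le_div_iff₀ hT]
  exact (lt_of_not_ge hy).le

theorem integral_comp_dist_div {φ : ℝ → ℝ} {a b : ℝ} (hab : a ≤ b) (hφ : ContDiff ℝ 1 φ)
    (hφb : ∀ u, b ≤ u → φ u = 0) (hφa : ∀ u ∈ Icc 0 a, φ u = φ 0) (x : X) {T : ℝ}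
    (hT : 0 < T) :
    ∫ y, φ (dist y x / T) ∂μ = -∫ t in a..b, deriv φ t * μ.real (ball x (t * T)) := by
  set K := closedBall x (b * T)
  have : IsFiniteMeasure (μ.restrict K) :=
    isFiniteMeasure_restrict.mpr measure_closedBall_lt_top.ne
  have hφK : ∀ y ∉ K, φ (dist y x / T) = 0 := fun y hy ↦
    hφb _ ((le_div_iff₀ hT).mpr (lt_of_not_ge hy).le)
  have hball : ∀ t ∈ uIcc a b, μ.real (ball x (t * T)) = (μ.restrict K).real (ball x (t * T)) :=
    fun t ht ↦ by
      have htb : t * T ≤ b * T := by gcongr; exact (uIcc_of_le hab ▸ ht).2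
      rw [measureReal_restrict_apply measurableSet_ball,
        inter_eq_left.mpr (ball_subset_closedBall.trans (closedBall_subset_closedBall htb))]
  rw [← setIntegral_eq_integral_of_forall_compl_eq_zero hφK,
    integral_comp_dist_div_of_isFiniteMeasure _ hab hφ hφb hφa x hT,
    intervalIntegral.integral_congr fun t ht ↦ by rw [← hball t ht]]

end LocallyFinite

section Density

variable {d : ℕ} (μ : Measure (EuclideanSpace ℝ (Fin d))) (s : ℝ)

lemma rpow_mul_ballDensity_mul (x : EuclideanSpace ℝ (Fin d)) {t T : ℝ} (ht : 0 < t)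
    (hT : 0 ≤ T) : t ^ s * ballDensity μ s x (t * T) = μ.real (ball x (t * T)) / T ^ s := by
  rw [ballDensity, Real.mul_rpow ht.le hT, ← mul_div_assoc,
    mul_div_mul_left _ _ (Real.rpow_pos_of_pos ht s).ne', measureReal_def]

variable {φ : ℝ → ℝ} {a b : ℝ}

lemma eqOn_rpow_mul_deriv_mul_ballDensity (ha : 0 < a) (hab : a ≤ b)
    (x : EuclideanSpace ℝ (Fin d)) {T : ℝ} (hT : 0 ≤ T) :
    EqOn (fun t ↦ t ^ s * deriv φ t * ballDensity μ s x (t * T))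
      (fun t ↦ deriv φ t * μ.real (ball x (t * T)) / T ^ s) (uIcc a b) := fun t ht ↦ by
  have ht : 0 < t := ha.trans_le (uIcc_of_le hab ▸ ht).1
  dsimp only
  rw [mul_comm (t ^ s), mul_assoc, rpow_mul_ballDensity_mul μ s x ht hT, mul_div_assoc]

variable [IsLocallyFiniteMeasure μ]

lemma intervalIntegrable_rpow_mul_deriv_mul_ballDensity (ha : 0 < a) (hab : a ≤ b)
    (hφ : ContDiff ℝ 1 φ) (x : EuclideanSpace ℝ (Fin d)) {T : ℝ} (hT : 0 ≤ T) :
    IntervalIntegrable (fun t ↦ t ^ s * deriv φ t * ballDensity μ s x (t * T)) volume a b :=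
  ((intervalIntegrable_mul_measureReal_ball μ (hφ.continuous_deriv le_rfl).continuousOn x
    hT).div_const _).congr_uIoo
    ((eqOn_rpow_mul_deriv_mul_ballDensity μ s ha hab x hT).symm.mono Ioo_subset_Icc_self)

theorem integral_comp_dist_div_div_rpow (ha : 0 < a) (hab : a ≤ b) (hφ : ContDiff ℝ 1 φ)
    (hφb : ∀ u, b ≤ u → φ u = 0) (hφa : ∀ u ∈ Icc 0 a, φ u = φ 0)
    (x : EuclideanSpace ℝ (Fin d)) {T : ℝ} (hT : 0 < T) :
    ∫ y, φ (dist y x / T) / T ^ s ∂μ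
      = -∫ t in a..b, t ^ s * deriv φ t * ballDensity μ s x (t * T) := by
  rw [integral_div, integral_comp_dist_div μ hab hφ hφb hφa x hT, neg_div,
    ← intervalIntegral.integral_div,
    intervalIntegral.integral_congr (eqOn_rpow_mul_deriv_mul_ballDensity μ s ha hab x hT.le)]

end Density

theorem statement4_general (d : ℕ) (s : ℝ)
    (μ : Measure (EuclideanSpace ℝ (Fin d))) [IsLocallyFiniteMeasure μ] (φ : ℝ → ℝ)
    (hφ_smooth : ContDiff ℝ (⊤ : ℕ∞) φ)
    (hφ_supp : Function.support φ ⊆ Icc (0 : ℝ) 2)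
    (hφ_const : ∀ u ∈ Icc (0 : ℝ) (1 / 2), φ u = φ 0)
    (x : EuclideanSpace ℝ (Fin d)) (R : ℝ) (hR : 0 < R) :
    deltaPhi μ s φ x R = -∫ t in (1 / 2 : ℝ)..2, t ^ s * deriv φ t * deltaDensity μ s x (t * R) := by
  have hφ : ContDiff ℝ 1 φ := hφ_smooth.of_le (by exact_mod_cast le_top)
  have hφ_two (u : ℝ) : 2 ≤ u → φ u = 0 :=
    hφ.continuous.eq_zero_of_support_subset_Iic (hφ_supp.trans Icc_subset_Iic_self)
  have h2R : 0 < 2 * R := by positivity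
  have hintegrable {T : ℝ} (hT : 0 < T) : Integrable (fun y ↦ φ (dist y x / T) / T ^ s) μ :=
    (integrable_comp_dist_div_s4 μ hφ.continuous hφ_two x hT).div_const _
  have hformula {T : ℝ} (hT : 0 < T) :=
    integral_comp_dist_div_div_rpow μ s (by norm_num) (by norm_num) hφ hφ_two hφ_const x hT
  have hintervalIntegrable {T : ℝ} (hT : 0 < T) : IntervalIntegrable
      (fun t ↦ t ^ s * deriv φ t * ballDensity μ s x (t * T)) volume (1 / 2) 2 :=
    intervalIntegrable_rpow_mul_deriv_mul_ballDensity μ s (by norm_num) (by norm_num) hφ x hT.le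
  have hscale (t : ℝ) : 2 * (t * R) = t * (2 * R) := by ring
  simp_rw [deltaPhi, integral_sub (hintegrable hR) (hintegrable h2R), hformula hR,
    hformula h2R, deltaDensity, hscale, mul_sub]
  rw [intervalIntegral.integral_sub (hintervalIntegrable hR) (hintervalIntegrable h2R)]
  ring

theorem statement4 (d : ℕ) (s : ℝ) (hs : 0 < s)
    (μ : Measure (EuclideanSpace ℝ (Fin d))) [IsLocallyFiniteMeasure μ] (φ : ℝ → ℝ)
    (hφ_smooth : ContDiff ℝ (⊤ : ℕ∞) φ)
    (hφ_supp : Function.support φ ⊆ Icc (0 : ℝ) 2)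
    (hφ_const : ∀ u ∈ Icc (0 : ℝ) (1 / 2), φ u = φ 0)
    (x : EuclideanSpace ℝ (Fin d)) (R : ℝ) (hR : 0 < R) :
    deltaPhi μ s φ x R = -∫ t in (1 / 2 : ℝ)..2, t ^ s * deriv φ t * deltaDensity μ s x (t * R) :=
  statement4_general d s μ φ hφ_smooth hφ_supp hφ_const x R hR
end

section
/- Let s > 0 and let μ be a Radon measure on ℝ^d with 0 ∈ supp(μ), and suppose that Δ^s_μ(x,r) = 0 for every x ∈ supp(μ) and every r > 0. Then, with c_0 = μ(B(0,1)), for every x ∈ supp(μ) and every integer m one has c_0 · 2^{(m−1)s} ≤ μ(B(x, 2^m)) ≤ c_0 · 2^{(m+1)s}; in particular μ is s-Ahlfors–David regular. -/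
/-! Vanishing of `Δ^s_μ(x, ·)` says `μ(B(x,2r)) = 2^s μ(B(x,r))`, hence
`μ(B(x,2^m)) = 2^{ms} μ(B(x,1))` for every `x` in the support. Two points `x, y` of the support
are compared at a dyadic scale `R ≥ |x - y|`, where `B(x,R) ⊆ B(y,2R)`; this gives
`μ(B(x,1)) ≤ 2^s μ(B(y,1))`. Monotonicity of `r ↦ μ(B(x,r))` then interpolates between
dyadic radii. -/

open MeasureTheory Metric Set ENNReal Filter

/-- The support of a measure: points all of whose neighborhoods have positive measure. -/
def msupport {d : ℕ} (μ : Measure (EuclideanSpace ℝ (Fin d))) : Set (EuclideanSpace ℝ (Fin d)) :=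
  {x | ∀ r : ℝ, 0 < r → 0 < μ (ball x r)}

theorem apply_two_zpow_of_apply_two_mul {G₀ : Type*} [GroupWithZero G₀] {f : ℝ → G₀} {a : G₀}
    (ha : a ≠ 0) (hf : ∀ r, 0 < r → f (2 * r) = a * f r) (m : ℤ) :
    f (2 ^ m) = a ^ m * f 1 := by
  have step : ∀ k : ℤ, f (2 ^ (1 + k)) = a * f (2 ^ k) := fun k => by
    rw [zpow_one_add₀ two_ne_zero, hf _ (zpow_pos two_pos k)]
  induction m using Int.induction_on with
  | zero => simp
  | succ n ih => rw [add_comm, step, ih, ← mul_assoc, ← zpow_one_add₀ ha]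
  | pred n ih =>
    rw [show -(n : ℤ) = 1 + (-n - 1) by ring, step, zpow_one_add₀ ha, mul_assoc] at ih
    exact mul_left_cancel₀ ha ih

theorem deltaDensity_eq_zero_iff {d : ℕ} {μ : Measure (EuclideanSpace ℝ (Fin d))} {s r : ℝ}
    {x : EuclideanSpace ℝ (Fin d)} (hr : 0 < r) :
    deltaDensity μ s x r = 0 ↔
      (μ (ball x (2 * r))).toReal = 2 ^ s * (μ (ball x r)).toReal := by
  have hrs : 0 < r ^ s := Real.rpow_pos_of_pos hr s
  rw [deltaDensity, ballDensity, ballDensity, sub_eq_zero, Real.mul_rpow zero_le_two hr.le,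
    div_eq_div_iff hrs.ne' (by positivity)]
  constructor <;> intro h <;> nlinarith

def HasExactDoubling {X : Type*} [PseudoMetricSpace X] [MeasurableSpace X] (μ : Measure X)
    (s : ℝ) (x : X) : Prop :=
  ∀ r : ℝ, 0 < r → (μ (ball x (2 * r))).toReal = 2 ^ s * (μ (ball x r)).toReal

section
variable {X : Type*} [PseudoMetricSpace X] [MeasurableSpace X] {μ : Measure X} {s : ℝ} {x y : X}

theorem HasExactDoubling.measure_ball_two_zpow (hx : HasExactDoubling μ s x) (m : ℤ) :
    (μ (ball x (2 ^ m))).toReal = 2 ^ ((m : ℝ) * s) * (μ (ball x 1)).toReal := by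
  rw [apply_two_zpow_of_apply_two_mul (f := fun r => (μ (ball x r)).toReal)
    (Real.rpow_pos_of_pos two_pos s).ne' hx m, mul_comm (m : ℝ),
    Real.rpow_mul_intCast zero_le_two]

variable [ProperSpace X] [IsLocallyFiniteMeasure μ]

theorem monotone_toReal_measure_ball (x : X) : Monotone fun r => (μ (ball x r)).toReal :=
  fun _ _ h => ENNReal.toReal_mono measure_ball_lt_top.ne (measure_mono (ball_subset_ball h))

theorem HasExactDoubling.measure_ball_one_le (hx : HasExactDoubling μ s x)
    (hy : HasExactDoubling μ s y) :
    (μ (ball x 1)).toReal ≤ 2 ^ s * (μ (ball y 1)).toReal := by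
  obtain ⟨n, hn⟩ := pow_unbounded_of_one_lt (dist x y) one_lt_two
  have hR : (0 : ℝ) < 2 ^ (n : ℤ) := zpow_pos two_pos _
  have hsub : ball x (2 ^ (n : ℤ)) ⊆ ball y (2 * 2 ^ (n : ℤ)) :=
    ball_subset_ball' (by rw [zpow_natCast]; linarith)
  have hle : (μ (ball x (2 ^ (n : ℤ)))).toReal ≤ (μ (ball y (2 * 2 ^ (n : ℤ)))).toReal :=
    ENNReal.toReal_mono measure_ball_lt_top.ne (measure_mono hsub)
  rw [hy _ hR, hx.measure_ball_two_zpow, hy.measure_ball_two_zpow, mul_left_comm] at hle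
  exact le_of_mul_le_mul_left hle (Real.rpow_pos_of_pos two_pos _)

theorem HasExactDoubling.measure_ball_two_zpow_mem_Icc (hx : HasExactDoubling μ s x)
    (hy : HasExactDoubling μ s y) (m : ℤ) :
    (μ (ball y 1)).toReal * 2 ^ (((m : ℝ) - 1) * s) ≤ (μ (ball x (2 ^ m))).toReal ∧
      (μ (ball x (2 ^ m))).toReal ≤ (μ (ball y 1)).toReal * 2 ^ (((m : ℝ) + 1) * s) := by
  have hxy := hx.measure_ball_one_le hy
  have hyx := hy.measure_ball_one_le hx
  have hA : 0 < (2 : ℝ) ^ ((m : ℝ) * s) := Real.rpow_pos_of_pos two_pos _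
  rw [hx.measure_ball_two_zpow, sub_mul, add_mul, one_mul, Real.rpow_sub two_pos,
    Real.rpow_add two_pos, mul_div_assoc', div_le_iff₀ (Real.rpow_pos_of_pos two_pos _)]
  constructor <;> nlinarith

end

theorem Monotone.rpow_bounds_of_two_zpow_bounds {f : ℝ → ℝ} (hf : Monotone f) {a s : ℝ}
    (ha : 0 ≤ a) (hs : 0 ≤ s)
    (h : ∀ m : ℤ,
      a * 2 ^ (((m : ℝ) - 1) * s) ≤ f (2 ^ m) ∧ f (2 ^ m) ≤ a * 2 ^ (((m : ℝ) + 1) * s))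
    {r : ℝ} (hr : 0 < r) : a / 4 ^ s * r ^ s ≤ f r ∧ f r ≤ a * 4 ^ s * r ^ s := by
  have h4 : (4 : ℝ) ^ s = 2 ^ (2 * s) := by rw [Real.rpow_mul zero_le_two]; norm_num
  obtain ⟨m, hm, hm'⟩ := exists_mem_Ico_zpow hr one_lt_two
  have hr_lo : (2 : ℝ) ^ ((m : ℝ) * s) ≤ r ^ s := by
    rw [Real.rpow_intCast_mul zero_le_two]
    exact Real.rpow_le_rpow (zpow_pos two_pos m).le hm hs
  have hr_hi : r ^ s ≤ (2 : ℝ) ^ (((m : ℝ) + 1) * s) := by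
    rw [← Int.cast_one, ← Int.cast_add, Real.rpow_intCast_mul zero_le_two]
    exact Real.rpow_le_rpow hr.le hm'.le hs
  constructor
  · calc a / 4 ^ s * r ^ s ≤ a / 4 ^ s * 2 ^ (((m : ℝ) + 1) * s) := by gcongr
      _ = a * 2 ^ (((m : ℝ) - 1) * s) := by
        rw [h4, div_mul_eq_mul_div, mul_div_assoc, ← Real.rpow_sub two_pos]; ring_nf
      _ ≤ f (2 ^ m) := (h m).1
      _ ≤ f r := hf hm
  · calc f r ≤ f (2 ^ (m + 1)) := hf hm'.le
      _ ≤ a * 2 ^ ((((m + 1 : ℤ) : ℝ) + 1) * s) := (h (m + 1)).2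
      _ = a * 4 ^ s * 2 ^ ((m : ℝ) * s) := by
        rw [h4, mul_assoc, ← Real.rpow_add two_pos]; push_cast; ring_nf
      _ ≤ a * 4 ^ s * r ^ s := by gcongr

theorem exists_pos_inv_le_and_le {a b : ℝ} (ha : 0 < a) (hb : 0 < b) :
    ∃ c : ℝ, 0 < c ∧ c⁻¹ ≤ a ∧ b ≤ c :=
  ⟨max b a⁻¹, lt_max_of_lt_left hb, inv_le_of_inv_le₀ ha (le_max_right _ _), le_max_left _ _⟩

theorem statement6 (d : ℕ) (s : ℝ) (hs : 0 < s)
    (μ : Measure (EuclideanSpace ℝ (Fin d))) [IsLocallyFiniteMeasure μ]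
    (h0 : (0 : EuclideanSpace ℝ (Fin d)) ∈ msupport μ)
    (hdelta : ∀ x ∈ msupport μ, ∀ r : ℝ, 0 < r → deltaDensity μ s x r = 0) :
    (∀ x ∈ msupport μ, ∀ m : ℤ,
        μ (ball (0 : EuclideanSpace ℝ (Fin d)) 1) * ENNReal.ofReal ((2 : ℝ) ^ (((m : ℝ) - 1) * s))
            ≤ μ (ball x ((2 : ℝ) ^ m)) ∧
        μ (ball x ((2 : ℝ) ^ m))
            ≤ μ (ball (0 : EuclideanSpace ℝ (Fin d)) 1) *
                ENNReal.ofReal ((2 : ℝ) ^ (((m : ℝ) + 1) * s))) ∧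
      ∃ c : ℝ, 0 < c ∧ ∀ x ∈ msupport μ, ∀ r : ℝ, 0 < r →
        ENNReal.ofReal r ≤ EMetric.diam (msupport μ) →
          ENNReal.ofReal (c⁻¹ * r ^ s) ≤ μ (ball x r) ∧
            μ (ball x r) ≤ ENNReal.ofReal (c * r ^ s) := by
  have hμ (x : EuclideanSpace ℝ (Fin d)) (r : ℝ) :
      μ (ball x r) = ENNReal.ofReal (μ (ball x r)).toReal :=
    (ofReal_toReal measure_ball_lt_top.ne).symm
  have hdoubling : ∀ x ∈ msupport μ, HasExactDoubling μ s x := fun x hx r hr =>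
    (deltaDensity_eq_zero_iff hr).1 (hdelta x hx r hr)
  have hdyadic (x) (hx : x ∈ msupport μ) :=
    (hdoubling x hx).measure_ball_two_zpow_mem_Icc (hdoubling 0 h0)
  set c₀ := (μ (ball (0 : EuclideanSpace ℝ (Fin d)) 1)).toReal
  have hc₀ : 0 < c₀ := ENNReal.toReal_pos (h0 1 one_pos).ne' measure_ball_lt_top.ne
  obtain ⟨c, hc, hc_inv, hc_le⟩ :=
    exists_pos_inv_le_and_le (a := c₀ / 4 ^ s) (b := c₀ * 4 ^ s) (by positivity) (by positivity)
  refine ⟨fun x hx m => ?_, c, hc, fun x hx r hr _ => ?_⟩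
  · rw [hμ x, hμ 0, ← ofReal_mul toReal_nonneg, ← ofReal_mul toReal_nonneg]
    exact ⟨ofReal_le_ofReal (hdyadic x hx m).1, ofReal_le_ofReal (hdyadic x hx m).2⟩
  · obtain ⟨hlo, hhi⟩ := (monotone_toReal_measure_ball x).rpow_bounds_of_two_zpow_bounds
      hc₀.le hs.le (hdyadic x hx) hr
    have hrs : 0 ≤ r ^ s := Real.rpow_nonneg hr.le s
    rw [hμ x r]
    exact ⟨ofReal_le_ofReal ((mul_le_mul_of_nonneg_right hc_inv hrs).trans hlo),
      ofReal_le_ofReal (hhi.trans (mul_le_mul_of_nonneg_right hc_le hrs))⟩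
end

section
/- Let 0 < s < d and let μ be a Radon measure on ℝ^d. If ∫ Ẇ^μ_s(x) dμ(x) < ∞, then lim_{r→∞} μ(B(0,r))³ / r^{2s} = 0. -/
open MeasureTheory Metric Set ENNReal Filter

/-- The Wolff potential `Ẇ^μ_s(x) = ∫_0^∞ (μ(B(x,r))/r^s)² dr/r`. -/
noncomputable def wolffPot {d : ℕ} (μ : Measure (EuclideanSpace ℝ (Fin d))) (s : ℝ)
    (x : EuclideanSpace ℝ (Fin d)) : ℝ≥0∞ :=
  ∫⁻ r in Ioi (0 : ℝ), ENNReal.ofReal (ballDensity μ s x r ^ 2 / r)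


/-! If `x ∈ B(z, r)` and `2r ≤ ρ ≤ 3r`, then `B(z, r) ⊆ B(x, ρ)`, so the integrand of the Wolff
potential is at least `μ(B(z, r))² / ((3r)^{2s} · 3r)` there. Integrating over `x ∈ B(z, r)` and
`ρ ∈ (2r, 3r)` bounds `μ(B(z, r))³ / r^{2s}` by `3^{2s+1}` times the part of `∫ Ẇ^μ_s dμ` coming
from radii `ρ > 2r`, which tends to `0` by dominated convergence since the whole integral is
finite. -/

open Topology

lemma tendsto_setLIntegral_Ioi_atTop {ν : Measure ℝ} {g : ℝ → ℝ≥0∞} {a : ℝ}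
    (hg : ∫⁻ r in Ioi a, g r ∂ν ≠ ∞) :
    Tendsto (fun R => ∫⁻ r in Ioi R, g r ∂ν) atTop (𝓝 0) := by
  simp_rw [← withDensity_apply g measurableSet_Ioi] at hg ⊢
  have hempty : ⋂ R : ℝ, Ioi R = ∅ := iInter_eq_empty_iff.mpr fun y => ⟨y, lt_irrefl y⟩
  have := tendsto_measure_iInter_atTop (fun R => measurableSet_Ioi.nullMeasurableSet)
    (fun _ _ h => Ioi_subset_Ioi h) ⟨a, hg⟩
  rwa [hempty, measure_empty] at this

lemma tendsto_lintegral_setLIntegral_Ioi_atTop {α : Type*} [MeasurableSpace α] {μ : Measure α}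
    {ν : Measure ℝ} [SFinite ν] {f : α → ℝ → ℝ≥0∞} (hf : Measurable (Function.uncurry f))
    {a : ℝ} (hfin : ∫⁻ x, ∫⁻ r in Ioi a, f x r ∂ν ∂μ ≠ ∞) :
    Tendsto (fun R => ∫⁻ x, ∫⁻ r in Ioi R, f x r ∂ν ∂μ) atTop (𝓝 0) := by
  have hmeas (R : ℝ) : Measurable fun x => ∫⁻ r in Ioi R, f x r ∂ν := hf.lintegral_prod_right'
  simpa using tendsto_lintegral_filter_of_dominated_convergence _
    (.of_forall hmeas)
    (eventually_ge_atTop a |>.mono fun R hR => .of_forall fun x =>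
      lintegral_mono_set (Ioi_subset_Ioi hR))
    hfin
    ((ae_lt_top (hmeas a) hfin).mono fun x hx => tendsto_setLIntegral_Ioi_atTop hx.ne)

lemma measurable_measure_ball {X : Type*} [PseudoMetricSpace X] [MeasurableSpace X]
    [OpensMeasurableSpace X] [SecondCountableTopology X] (μ : Measure X) [SFinite μ] :
    Measurable fun p : X × ℝ => μ (ball p.1 p.2) := by
  have hball (p : X × ℝ) :
      ball p.1 p.2 = Prod.mk p ⁻¹' {q : (X × ℝ) × X | dist q.2 q.1.1 < q.1.2} := rfl
  simp_rw [hball]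
  exact measurable_measure_prodMk_left (measurableSet_lt (by fun_prop) (by fun_prop))

lemma ofReal_pow_three_div_rpow {a r : ℝ} (s : ℝ) (ha : 0 ≤ a) (hr : 0 < r) :
    ENNReal.ofReal a ^ 3 / ENNReal.ofReal (r ^ (2 * s)) = ENNReal.ofReal (3 ^ (2 * s + 1)) *
      (ENNReal.ofReal a *
        (ENNReal.ofReal ((a / (3 * r) ^ s) ^ 2 / (3 * r)) * ENNReal.ofReal r)) := by
  rw [← ENNReal.ofReal_pow ha, ← ENNReal.ofReal_div_of_pos (by positivity),
    ← ENNReal.ofReal_mul (by positivity), ← ENNReal.ofReal_mul ha,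
    ← ENNReal.ofReal_mul (by positivity)]
  congr 1
  rw [two_mul, Real.rpow_add hr, Real.rpow_add three_pos, Real.rpow_add three_pos, Real.rpow_one,
    Real.mul_rpow zero_le_three hr.le]
  field_simp

section Wolff

variable {d : ℕ} {μ : Measure (EuclideanSpace ℝ (Fin d))} {s : ℝ}

lemma measurable_ballDensity_sq_div [SFinite μ] :
    Measurable (Function.uncurry fun x r => ENNReal.ofReal (ballDensity μ s x r ^ 2 / r)) := by
  have hball := (measurable_measure_ball μ).ennreal_toReal
  refine ENNReal.measurable_ofReal.comp (((hball.div ?_).pow_const 2).div measurable_snd)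
  exact measurable_snd.pow_const s

noncomputable def wolffTail (μ : Measure (EuclideanSpace ℝ (Fin d))) (s R : ℝ) : ℝ≥0∞ :=
  ∫⁻ x, (∫⁻ r in Ioi R, ENNReal.ofReal (ballDensity μ s x r ^ 2 / r)) ∂μ

lemma tendsto_wolffTail_atTop [SFinite μ] (hW : ∫⁻ x, wolffPot μ s x ∂μ < ⊤) :
    Tendsto (wolffTail μ s) atTop (𝓝 0) :=
  tendsto_lintegral_setLIntegral_Ioi_atTop measurable_ballDensity_sq_div hW.ne

lemma div_rpow_le_ballDensity [IsLocallyFiniteMeasure μ] (hs : 0 ≤ s)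
    {z x : EuclideanSpace ℝ (Fin d)} {r ρ : ℝ} (hx : x ∈ ball z r) (hρ : ρ ∈ Icc (2 * r) (3 * r)) :
    (μ (ball z r)).toReal / (3 * r) ^ s ≤ ballDensity μ s x ρ := by
  have hr : 0 < r := pos_of_mem_ball hx
  have hρ0 : 0 < ρ := by linarith [hρ.1]
  have hsub : ball z r ⊆ ball x ρ := by
    refine ball_subset_ball' ?_
    rw [dist_comm]
    linarith [mem_ball.mp hx, hρ.1]
  unfold ballDensity
  gcongr
  · exact measure_ball_lt_top.ne
  · exact hρ.2

lemma measure_ball_mul_le_wolffTail [IsLocallyFiniteMeasure μ] (hs : 0 ≤ s)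
    (z : EuclideanSpace ℝ (Fin d)) (r : ℝ) :
    μ (ball z r) * (ENNReal.ofReal (((μ (ball z r)).toReal / (3 * r) ^ s) ^ 2 / (3 * r)) *
      ENNReal.ofReal r) ≤ wolffTail μ s (2 * r) := by
  set c := ENNReal.ofReal (((μ (ball z r)).toReal / (3 * r) ^ s) ^ 2 / (3 * r))
  calc μ (ball z r) * (c * ENNReal.ofReal r)
      = ∫⁻ _ in ball z r, (∫⁻ _ in Ioo (2 * r) (3 * r), c) ∂μ := by
        rw [setLIntegral_const, setLIntegral_const, Real.volume_Ioo,
          show 3 * r - 2 * r = r by ring, mul_comm]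
    _ ≤ ∫⁻ x in ball z r, (∫⁻ ρ in Ioo (2 * r) (3 * r),
          ENNReal.ofReal (ballDensity μ s x ρ ^ 2 / ρ)) ∂μ := by
        refine setLIntegral_mono' measurableSet_ball fun x hx => ?_
        refine setLIntegral_mono' measurableSet_Ioo fun ρ hρ => ?_
        have hr : 0 < r := pos_of_mem_ball hx
        have hρ0 : 0 < ρ := by linarith [hρ.1]
        have hdens := div_rpow_le_ballDensity (μ := μ) hs hx (Ioo_subset_Icc_self hρ)
        exact ENNReal.ofReal_le_ofReal <|
          div_le_div₀ (sq_nonneg _) (pow_le_pow_left₀ (by positivity) hdens 2) hρ0 hρ.2.le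
    _ ≤ ∫⁻ x in ball z r, (∫⁻ ρ in Ioi (2 * r),
          ENNReal.ofReal (ballDensity μ s x ρ ^ 2 / ρ)) ∂μ :=
        lintegral_mono fun x => lintegral_mono_set Ioo_subset_Ioi_self
    _ ≤ wolffTail μ s (2 * r) := setLIntegral_le_lintegral _ _

lemma measure_ball_pow_three_div_le [IsLocallyFiniteMeasure μ] (hs : 0 ≤ s)
    (z : EuclideanSpace ℝ (Fin d)) {r : ℝ} (hr : 0 < r) :
    μ (ball z r) ^ 3 / ENNReal.ofReal (r ^ (2 * s)) ≤
      ENNReal.ofReal (3 ^ (2 * s + 1)) * wolffTail μ s (2 * r) := by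
  have hfin : μ (ball z r) ≠ ∞ := measure_ball_lt_top.ne
  conv_lhs => rw [← ENNReal.ofReal_toReal hfin,
    ofReal_pow_three_div_rpow s ENNReal.toReal_nonneg hr, ENNReal.ofReal_toReal hfin]
  gcongr
  exact measure_ball_mul_le_wolffTail hs z r

end Wolff

theorem statement12_general (d : ℕ) (s : ℝ) (hs0 : 0 < s)
    (μ : Measure (EuclideanSpace ℝ (Fin d))) [IsLocallyFiniteMeasure μ]
    (hW : (∫⁻ x, wolffPot μ s x ∂μ) < ⊤) :
    Filter.Tendsto
      (fun r : ℝ => μ (ball (0 : EuclideanSpace ℝ (Fin d)) r) ^ 3 / ENNReal.ofReal (r ^ (2 * s)))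
      Filter.atTop (nhds 0) := by
  have htail : Tendsto (fun r => ENNReal.ofReal (3 ^ (2 * s + 1)) * wolffTail μ s (2 * r))
      atTop (𝓝 0) := by
    simpa using ENNReal.Tendsto.const_mul
      ((tendsto_wolffTail_atTop hW).comp (tendsto_id.const_mul_atTop two_pos))
      (Or.inr ofReal_ne_top)
  refine tendsto_of_tendsto_of_tendsto_of_le_of_le' tendsto_const_nhds htail
    (.of_forall fun _ => bot_le) ?_
  filter_upwards [eventually_gt_atTop 0] with r hr
  exact measure_ball_pow_three_div_le hs0.le 0 hr

theorem statement12 (d : ℕ) (s : ℝ) (hs0 : 0 < s) (hsd : s < d)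
    (μ : Measure (EuclideanSpace ℝ (Fin d))) [IsLocallyFiniteMeasure μ]
    (hW : (∫⁻ x, wolffPot μ s x ∂μ) < ⊤) :
    Filter.Tendsto
      (fun r : ℝ => μ (ball (0 : EuclideanSpace ℝ (Fin d)) r) ^ 3 / ENNReal.ofReal (r ^ (2 * s)))
      Filter.atTop (nhds 0) :=
  statement12_general d s hs0 μ hW
end
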